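/- arXiv:1109.2915 — 3 statements merged into one kernel-verified Lean document; each statement's English description precedes it below -/
import Mathlib

section
/- Let k be an algebraically closed field, A a finite-dimensional k-algebra, θ an integral weight, and M a θ-stable A-module. Then every nonzero endomorphism of M is an isomorphism; consequently End_A(M) is a division ring, and since k is algebraically closed and M finite-dimensional, End_A(M) ≅ k. -/
open Module

/-! Setup: `A = kQ/I` is a (basic, finite-dimensional) algebra over the field `k`,
with complete system of orthogonal idempotents `e i` indexed by the (finite) vertex
set `ι = Q₀`.  For a finite-dimensional `A`-module `M`, its dimension vector has
`i`-th entry `dim_k (e i • M)`, and an integral weight `θ : ι → ℤ` evaluates on it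
as `θ(dim M) = ∑ i, θ i * dim_k (e i • M)`; this is `thetaDim` below. -/

/-- The `k`-linear endomorphism of `M` given by the action of `a : A`. -/
noncomputable def smulMap (k A : Type) [CommSemiring k] [Ring A] [Algebra k A] (a : A)
    (M : Type) [AddCommGroup M] [Module k M] [Module A M] [IsScalarTower k A M] :
    M →ₗ[k] M where
  toFun m := a • m
  map_add' := smul_add a
  map_smul' c m := smul_comm a c m

/-- `θ(dim M)`: the weight `θ` evaluated at the dimension vector of `M`. -/
noncomputable def thetaDim (k A ι : Type) [Field k] [Ring A] [Algebra k A] [Fintype ι]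
    (θ : ι → ℤ) (e : ι → A) (M : Type) [AddCommGroup M] [Module k M]
    [Module A M] [IsScalarTower k A M] : ℤ :=
  ∑ i, θ i * (finrank k (LinearMap.range (smulMap k A (e i) M)) : ℤ)

/-- `M` is `θ`-semi-stable: `θ(dim M) = 0` and `θ(dim M') ≤ 0` for all submodules. -/
noncomputable def IsSemistable (k A ι : Type) [Field k] [Ring A] [Algebra k A] [Fintype ι]
    (θ : ι → ℤ) (e : ι → A) (M : Type) [AddCommGroup M] [Module k M]
    [Module A M] [IsScalarTower k A M] : Prop :=
  thetaDim k A ι θ e M = 0 ∧ ∀ N : Submodule A M, thetaDim k A ι θ e ↥N ≤ 0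

/-- `M` is `θ`-stable: `M ≠ 0`, `θ(dim M) = 0` and `θ(dim M') < 0` for all proper
nonzero submodules. -/
noncomputable def IsStable (k A ι : Type) [Field k] [Ring A] [Algebra k A] [Fintype ι]
    (θ : ι → ℤ) (e : ι → A) (M : Type) [AddCommGroup M] [Module k M]
    [Module A M] [IsScalarTower k A M] : Prop :=
  Nontrivial M ∧ thetaDim k A ι θ e M = 0 ∧
    ∀ N : Submodule A M, N ≠ ⊥ → N ≠ ⊤ → thetaDim k A ι θ e ↥N < 0

/-! An endomorphism `φ` of `M` commutes with every idempotent `e i`, so rank–nullity for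
`φ` restricted to `e i • M` makes `θ(dim -)` additive along `φ`:
`θ(dim im φ) + θ(dim ker φ) = θ(dim M) = 0`. If `ker φ ≠ 0`, stability forces
`θ(dim ker φ) < 0` and `θ(dim im φ) ≤ 0`, which is absurd; so `φ` is injective, hence bijective
by finite dimensionality. Over an algebraically closed field `φ` has an eigenvalue `c`, and the
non-injective endomorphism `φ - c` must then vanish. -/
open LinearMap in
theorem finrank_map_range_add_finrank_map_ker {K V : Type*} [DivisionRing K] [AddCommGroup V]
    [Module K V] [FiniteDimensional K V] {p f : V →ₗ[K] V} (hp : IsIdempotentElem p)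
    (hpf : Commute p f) :
    finrank K (Submodule.map p (range f)) + finrank K (Submodule.map p (ker f)) =
      finrank K (range p) := by
  set g := f ∘ₗ (range p).subtype
  have hrange : range g = Submodule.map p (range f) := by
    rw [range_comp, Submodule.range_subtype, ← range_comp, ← range_comp,
      ← Module.End.mul_eq_comp, ← Module.End.mul_eq_comp, hpf.eq]
  have hker : Submodule.map (range p).subtype (ker g) = Submodule.map p (ker f) := by
    rw [ker_comp, Submodule.map_comap_subtype]
    ext x
    simp only [Submodule.mem_inf, hp.mem_range_iff, mem_ker, Submodule.mem_map]
    constructor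
    · rintro ⟨hx, hfx⟩
      exact ⟨x, hfx, hx⟩
    · rintro ⟨y, hy, rfl⟩
      refine ⟨congrFun (congrArg DFunLike.coe hp.eq) y, ?_⟩
      rw [← Module.End.mul_apply, ← hpf.eq, Module.End.mul_apply, hy, map_zero]
  rw [← hrange, ← hker, Submodule.finrank_map_subtype_eq, finrank_range_add_finrank_ker]

section smulMap

variable {k A : Type} [Field k] [Ring A] [Algebra k A]
  {M : Type} [AddCommGroup M] [Module k M] [Module A M] [IsScalarTower k A M]

theorem isIdempotentElem_smulMap {a : A} (ha : IsIdempotentElem a) :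
    IsIdempotentElem (smulMap k A a M) :=
  LinearMap.ext fun m => by simp [smulMap, smul_smul, ha.eq]

theorem commute_smulMap (a : A) (φ : M →ₗ[A] M) :
    Commute (smulMap k A a M) (φ.restrictScalars k) :=
  LinearMap.ext fun m => (φ.map_smul a m).symm

theorem finrank_range_smulMap_submodule (a : A) (N : Submodule A M) :
    finrank k (LinearMap.range (smulMap k A a N)) =
      finrank k (Submodule.map (smulMap k A a M) (N.restrictScalars k)) := by
  have hcomm : (N.subtype.restrictScalars k) ∘ₗ smulMap k A a N =
      smulMap k A a M ∘ₗ N.subtype.restrictScalars k := rfl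
  calc finrank k (LinearMap.range (smulMap k A a N))
      = finrank k (Submodule.map (N.subtype.restrictScalars k)
          (LinearMap.range (smulMap k A a N))) :=
        (Submodule.equivMapOfInjective _ Subtype.val_injective _).finrank_eq
    _ = _ := by rw [← LinearMap.range_comp, hcomm, LinearMap.range_comp,
      LinearMap.range_restrictScalars, Submodule.range_subtype]

variable (k)

theorem thetaDim_submodule {ι : Type} [Fintype ι] (θ : ι → ℤ) (e : ι → A) (N : Submodule A M) :
    thetaDim k A ι θ e N =
      ∑ i, θ i * (finrank k (Submodule.map (smulMap k A (e i) M) (N.restrictScalars k)) : ℤ) := by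
  simp only [thetaDim, finrank_range_smulMap_submodule]

theorem thetaDim_top {ι : Type} [Fintype ι] (θ : ι → ℤ) (e : ι → A) :
    thetaDim k A ι θ e (⊤ : Submodule A M) = thetaDim k A ι θ e M := by
  rw [thetaDim_submodule, thetaDim, Submodule.restrictScalars_top]
  exact Finset.sum_congr rfl fun i _ => by rw [Submodule.map_top]

theorem thetaDim_range_add_thetaDim_ker [FiniteDimensional k M] {ι : Type} [Fintype ι]
    (θ : ι → ℤ) {e : ι → A} (he : ∀ i, IsIdempotentElem (e i)) (φ : M →ₗ[A] M) :
    thetaDim k A ι θ e (LinearMap.range φ) + thetaDim k A ι θ e (LinearMap.ker φ) =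
      thetaDim k A ι θ e M := by
  rw [thetaDim_submodule, thetaDim_submodule, ← Finset.sum_add_distrib]
  refine Finset.sum_congr rfl fun i _ => ?_
  have hrank := finrank_map_range_add_finrank_map_ker (isIdempotentElem_smulMap (M := M) (he i))
    (commute_smulMap (k := k) (e i) φ)
  rw [LinearMap.range_restrictScalars, LinearMap.ker_restrictScalars] at hrank
  rw [← mul_add, ← Nat.cast_add, hrank]

end smulMap

theorem IsStable.bijective_of_ne_zero {k A ι : Type} [Field k] [Ring A] [Algebra k A]
    [Fintype ι] {θ : ι → ℤ} {e : ι → A} (he : ∀ i, IsIdempotentElem (e i))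
    {M : Type} [AddCommGroup M] [Module k M] [Module A M] [IsScalarTower k A M]
    [FiniteDimensional k M] (hM : IsStable k A ι θ e M) {φ : M →ₗ[A] M} (hφ : φ ≠ 0) :
    Function.Bijective φ := by
  obtain ⟨-, hzero, hstable⟩ := hM
  have hinj : Function.Injective φ := by
    by_contra hker
    rw [← LinearMap.ker_eq_bot] at hker
    have hker_neg := hstable _ hker (mt LinearMap.ker_eq_top.mp hφ)
    have hrange_nonpos : thetaDim k A ι θ e (LinearMap.range φ) ≤ 0 := by
      by_cases htop : LinearMap.range φ = ⊤
      · rw [htop, thetaDim_top, hzero]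
      · exact (hstable _ (mt LinearMap.range_eq_bot.mp hφ) htop).le
    have hadd := thetaDim_range_add_thetaDim_ker k θ he φ
    omega
  exact ⟨hinj, LinearMap.injective_iff_surjective (K := k) (f := φ.restrictScalars k) |>.mp hinj⟩

theorem exists_forall_eq_smul_of_injective_of_ne_zero {k A : Type} [Field k] [IsAlgClosed k]
    [Ring A] [Algebra k A] {M : Type} [AddCommGroup M] [Module k M] [Module A M]
    [IsScalarTower k A M] [FiniteDimensional k M] [Nontrivial M]
    (h : ∀ φ : M →ₗ[A] M, φ ≠ 0 → Function.Injective φ) (φ : M →ₗ[A] M) :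
    ∃ c : k, ∀ m : M, φ m = c • m := by
  obtain ⟨c, hc⟩ := Module.End.exists_eigenvalue (φ.restrictScalars k)
  obtain ⟨v, hv⟩ := hc.exists_hasEigenvector
  refine ⟨c, fun m => sub_eq_zero.mp (LinearMap.congr_fun (?_ : φ - c • 1 = 0) m)⟩
  have hφv : φ v = c • v := hv.apply_eq_smul
  by_contra hne
  exact hv.2 (h _ hne (by simp [hφv]))

theorem stmt_5_general (k A ι : Type) [Field k] [Ring A] [Algebra k A]
    [Fintype ι] (θ : ι → ℤ) (e : ι → A)
    (he : ∀ i, IsIdempotentElem (e i))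
    [IsAlgClosed k]
    (M : Type) [AddCommGroup M] [Module k M] [Module A M] [IsScalarTower k A M] [FiniteDimensional k M]
    (hM : IsStable k A ι θ e M) :
    (∀ φ : M →ₗ[A] M, φ ≠ 0 → Function.Bijective φ) ∧
    (∀ φ : M →ₗ[A] M, ∃ c : k, ∀ m : M, φ m = c • m) := by
  have hbij (φ : M →ₗ[A] M) (hφ : φ ≠ 0) : Function.Bijective φ := hM.bijective_of_ne_zero he hφ
  have : Nontrivial M := hM.1
  exact ⟨hbij, exists_forall_eq_smul_of_injective_of_ne_zero fun φ hφ => (hbij φ hφ).1⟩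

/-- over an algebraically closed field, every nonzero endomorphism of a
`θ`-stable module `M` is an isomorphism, and `End_A(M) ≅ k`: every endomorphism is a
scalar. -/
theorem stmt_5 (k A ι : Type) [Field k] [Ring A] [Algebra k A] [FiniteDimensional k A]
    [Fintype ι] (θ : ι → ℤ) (e : ι → A)
    (he : ∀ i, IsIdempotentElem (e i))
    (horth : Pairwise fun i j => e i * e j = 0)
    (hsum : ∑ i, e i = 1)
    [IsAlgClosed k]
    (M : Type) [AddCommGroup M] [Module k M] [Module A M] [IsScalarTower k A M] [FiniteDimensional k M]
    (hM : IsStable k A ι θ e M) :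
    (∀ φ : M →ₗ[A] M, φ ≠ 0 → Function.Bijective φ) ∧
    (∀ φ : M →ₗ[A] M, ∃ c : k, ∀ m : M, φ m = c • m) :=
  stmt_5_general k A ι θ e he M hM
end

section
/- Let Q be a finite quiver without oriented cycles and let V, W be finite-dimensional representations of Q over a field k. Then ⟨dim V, dim W⟩ = dim_k Hom_Q(V, W) − dim_k Ext^1_Q(V, W), where ⟨d, e⟩ = Σ_{i∈Q_0} d(i)e(i) − Σ_{a∈Q_1} d(ta)e(ha). -/
/-! Rank–nullity for the standard map `f`: `dim ker f − dim coker f` equals the dimension of its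
source, `Σᵢ d(i)e(i)`, minus that of its target, `Σₐ d(ta)e(ha)`. -/

open Module

/-- The standard map `⊕_{i∈Q₀} Hom_k(V i, W i) → ⊕_{a∈Q₁} Hom_k(V (t a), W (h a))`,
`φ ↦ (φ (h a) ∘ V a − W a ∘ φ (t a))_a`, whose kernel is `Hom_Q(V, W)` and whose
cokernel is `Ext¹_Q(V, W)`. -/
noncomputable def quiverStdMap (k : Type) [Field k] (V E : Type) (t h : E → V)
    (Vr Wr : V → Type)
    [∀ i, AddCommGroup (Vr i)] [∀ i, Module k (Vr i)]
    [∀ i, AddCommGroup (Wr i)] [∀ i, Module k (Wr i)]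
    (Vm : (a : E) → (Vr (t a) →ₗ[k] Vr (h a)))
    (Wm : (a : E) → (Wr (t a) →ₗ[k] Wr (h a))) :
    ((i : V) → (Vr i →ₗ[k] Wr i)) →ₗ[k] ((a : E) → (Vr (t a) →ₗ[k] Wr (h a))) where
  toFun φ a := (φ (h a)) ∘ₗ (Vm a) - (Wm a) ∘ₗ (φ (t a))
  map_add' φ ψ := by
    funext a
    simp only [Pi.add_apply, LinearMap.add_comp, LinearMap.comp_add]
    abel
  map_smul' c φ := by
    funext a
    simp only [Pi.smul_apply, LinearMap.smul_comp, LinearMap.comp_smul, RingHom.id_apply,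
      smul_sub]

theorem LinearMap.finrank_ker_sub_finrank_coker {K M N : Type*} [DivisionRing K]
    [AddCommGroup M] [Module K M] [FiniteDimensional K M]
    [AddCommGroup N] [Module K N] [FiniteDimensional K N] (f : M →ₗ[K] N) :
    (finrank K (ker f) : ℤ) - finrank K (N ⧸ range f) = finrank K M - finrank K N := by
  have rank_nullity := f.finrank_range_add_finrank_ker
  have quotient := (range f).finrank_quotient_add_finrank
  omega

theorem finrank_pi_linearMap (K : Type*) [Field K] {ι : Type*} [Fintype ι]
    (A B : ι → Type*) [∀ i, AddCommGroup (A i)] [∀ i, Module K (A i)]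
    [∀ i, FiniteDimensional K (A i)] [∀ i, AddCommGroup (B i)] [∀ i, Module K (B i)]
    [∀ i, FiniteDimensional K (B i)] :
    finrank K ((i : ι) → (A i →ₗ[K] B i)) = ∑ i, finrank K (A i) * finrank K (B i) := by
  rw [finrank_pi_fintype]
  exact Finset.sum_congr rfl fun i _ => finrank_linearMap K K (A i) (B i)

theorem stmt_11_general (k : Type) [Field k] (V E : Type) [Fintype V] [Fintype E] (t h : E → V)
    (Vr Wr : V → Type)
    [∀ i, AddCommGroup (Vr i)] [∀ i, Module k (Vr i)] [∀ i, FiniteDimensional k (Vr i)]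
    [∀ i, AddCommGroup (Wr i)] [∀ i, Module k (Wr i)] [∀ i, FiniteDimensional k (Wr i)]
    (Vm : (a : E) → (Vr (t a) →ₗ[k] Vr (h a)))
    (Wm : (a : E) → (Wr (t a) →ₗ[k] Wr (h a))) :
    (∑ i, (finrank k (Vr i) : ℤ) * (finrank k (Wr i) : ℤ))
      - ∑ a, (finrank k (Vr (t a)) : ℤ) * (finrank k (Wr (h a)) : ℤ)
    = (finrank k (LinearMap.ker (quiverStdMap k V E t h Vr Wr Vm Wm)) : ℤ)
      - (finrank k
          (((a : E) → (Vr (t a) →ₗ[k] Wr (h a))) ⧸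
            LinearMap.range (quiverStdMap k V E t h Vr Wr Vm Wm)) : ℤ) := by
  rw [LinearMap.finrank_ker_sub_finrank_coker, finrank_pi_linearMap, finrank_pi_linearMap]
  push_cast
  rfl

/-- for finite-dimensional representations `V`, `W` of a finite quiver
`Q` without oriented cycles, `⟨dim V, dim W⟩ = dim_k Hom_Q(V,W) − dim_k Ext¹_Q(V,W)`,
where `Hom_Q(V,W)` is the kernel and `Ext¹_Q(V,W)` the cokernel of the standard map. -/
theorem stmt_11 (k : Type) [Field k] (V E : Type) [Fintype V] [Fintype E] (t h : E → V)
    (hacyclic : Irreflexive (Relation.TransGen fun i j : V => ∃ a : E, t a = i ∧ h a = j))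
    (Vr Wr : V → Type)
    [∀ i, AddCommGroup (Vr i)] [∀ i, Module k (Vr i)] [∀ i, FiniteDimensional k (Vr i)]
    [∀ i, AddCommGroup (Wr i)] [∀ i, Module k (Wr i)] [∀ i, FiniteDimensional k (Wr i)]
    (Vm : (a : E) → (Vr (t a) →ₗ[k] Vr (h a)))
    (Wm : (a : E) → (Wr (t a) →ₗ[k] Wr (h a))) :
    (∑ i, (finrank k (Vr i) : ℤ) * (finrank k (Wr i) : ℤ))
      - ∑ a, (finrank k (Vr (t a)) : ℤ) * (finrank k (Wr (h a)) : ℤ)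
    = (finrank k (LinearMap.ker (quiverStdMap k V E t h Vr Wr Vm Wm)) : ℤ)
      - (finrank k
          (((a : E) → (Vr (t a) →ₗ[k] Wr (h a))) ⧸
            LinearMap.range (quiverStdMap k V E t h Vr Wr Vm Wm)) : ℤ) :=
  stmt_11_general k V E t h Vr Wr Vm Wm
end

section
/- Let A be a finite-dimensional algebra, T a tilting A-module of projective dimension ≤ 1, B = End_A(T)^{op}, and θ an integral weight of A satisfying: mod(A)^{ss}_θ ⊆ T(T) and θ(dim X) < 0 for every nonzero A-module X with Hom_A(T, X) = 0. Let u : K_0(A) → K_0(B) be the isometry u(dim M) = dim Hom_A(T,M) − dim Ext^1_A(T,M), and set θ' = θ ∘ u^{-1}. Then for every θ-semi-stable A-module M, the B-module Hom_A(T, M) is θ'-semi-stable. -/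
open Module

/-- `Ext¹_A(X, Y) = 0`: every short exact sequence `0 → Y → E → X → 0` splits. -/
def Ext1Vanishes (A : Type) [Ring A] (X Y : Type) [AddCommGroup X] [Module A X]
    [AddCommGroup Y] [Module A Y] : Prop :=
  ∀ (E : Type) [AddCommGroup E] [Module A E] (f : Y →ₗ[A] E) (g : E →ₗ[A] X),
    Function.Injective f → Function.Surjective g → Function.Exact f g →
      ∃ s : X →ₗ[A] E, g ∘ₗ s = LinearMap.id

/-- `X` belongs to `add T`: it is a direct summand of some `T^n`. -/
def IsSummandOfPower (A : Type) [Ring A] (T X : Type) [AddCommGroup T] [Module A T]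
    [AddCommGroup X] [Module A X] : Prop :=
  ∃ (n : ℕ) (s : X →ₗ[A] (Fin n → T)) (p : (Fin n → T) →ₗ[A] X), p ∘ₗ s = LinearMap.id

/-- `T` is a tilting `A`-module (of projective dimension at most one):
(1) there is a short exact sequence `0 → P₁ → P₀ → T → 0` with `P₀, P₁` projective;
(2) `Ext¹_A(T, T) = 0`;
(3) there is a short exact sequence `0 → A → T⁰ → T¹ → 0` with `T⁰, T¹ ∈ add T`. -/
def IsTiltingModule (A : Type) [Ring A] (T : Type) [AddCommGroup T] [Module A T] : Prop :=
  (∃ (P₀ P₁ : ModuleCat.{0} A) (f : ↥P₁ →ₗ[A] ↥P₀) (g : ↥P₀ →ₗ[A] T),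
      Module.Projective A P₀ ∧ Module.Projective A P₁ ∧
      Function.Injective f ∧ Function.Surjective g ∧ Function.Exact f g) ∧
  Ext1Vanishes A T T ∧
  (∃ (T₀ T₁ : ModuleCat.{0} A) (f : A →ₗ[A] ↥T₀) (g : ↥T₀ →ₗ[A] ↥T₁),
      IsSummandOfPower A T T₀ ∧ IsSummandOfPower A T T₁ ∧
      Function.Injective f ∧ Function.Surjective g ∧ Function.Exact f g)

section Instances

variable {k A : Type} [Field k] [Ring A] [Algebra k A]
variable {T : Type} [AddCommGroup T] [Module k T] [Module A T] [IsScalarTower k A T]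
variable {M : Type} [AddCommGroup M] [Module A M]

/-- `Hom_A(T, M)` is a left module over `B = End_A(T)^op` via `b • f = f ∘ b`. -/
instance homEndOpModule : Module (Module.End A T)ᵐᵒᵖ (T →ₗ[A] M) where
  smul b f := f ∘ₗ b.unop
  one_smul f := LinearMap.comp_id f
  mul_smul b c f := by
    show f ∘ₗ (c.unop * b.unop) = (f ∘ₗ c.unop) ∘ₗ b.unop
    rfl
  smul_zero b := LinearMap.zero_comp b.unop
  smul_add b f g := LinearMap.add_comp _ _ _
  add_smul b c f := LinearMap.comp_add _ _ _
  zero_smul f := LinearMap.comp_zero f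

instance homEndOpTower [Module k M] [IsScalarTower k A M] :
    IsScalarTower k (Module.End A T)ᵐᵒᵖ (T →ₗ[A] M) where
  smul_assoc c b f := by
    show f ∘ₗ (c • b).unop = c • (f ∘ₗ b.unop)
    ext t
    simp

end Instances

/-!
Let `B = End_A(T)ᵐᵒᵖ` and let `N ⊆ Hom_A(T, M)` be a `B`-submodule. Choose generators
`v : Fin n → N` and generators `x` of the relations among them inside `Hom_A(T, Tⁿ)`, and put
`W = Tⁿ / Σₗ im (x l)` (this is `T ⊗_B N`). The map `c : W → M` induced by `v` identifies
`Hom_A(T, W)` with `N` by composition: onto `N` because `Hom_A(T, Tⁿ) → Hom_A(T, W)` is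
surjective (`Ext¹(T, −)` vanishes on quotients of `Tᵐ`, as `pd T ≤ 1`), and injective because the
relations die in `W`. As `W ∈ T(T)`, `θ'(N) = θ(W) = θ(ker c) + θ(im c)`. Here `θ(im c) ≤ 0` by
semi-stability of `M`, and `ker c ∈ F(T)` since `Hom_A(T, c)` is injective, so `θ(ker c) ≤ 0`.
-/
instance Submodule.finiteDimensional_of_isScalarTower {k A M : Type} [Field k] [Ring A]
    [Algebra k A] [AddCommGroup M] [Module k M] [Module A M] [IsScalarTower k A M]
    [FiniteDimensional k M] (N : Submodule A M) : FiniteDimensional k N :=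
  FiniteDimensional.finiteDimensional_submodule (N.restrictScalars k)

section ThetaDim

variable {k R ι : Type} [Field k] [Ring R] [Algebra k R] [Fintype ι] (θ : ι → ℤ) (e : ι → R)
variable {M N : Type} [AddCommGroup M] [Module k M] [Module R M] [IsScalarTower k R M]
  [AddCommGroup N] [Module k N] [Module R N] [IsScalarTower k R N]

theorem range_smulMap_eq_map {f : M →ₗ[R] N} (hf : Function.Surjective f) (a : R) :
    LinearMap.range (smulMap k R a N) =
      (LinearMap.range (smulMap k R a M)).map (f.restrictScalars k) := by
  have hcomm :
      smulMap k R a N ∘ₗ f.restrictScalars k = f.restrictScalars k ∘ₗ smulMap k R a M := by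
    ext m
    exact (f.map_smul a m).symm
  rw [← LinearMap.range_comp, ← hcomm, LinearMap.range_comp_of_range_eq_top]
  exact LinearMap.range_eq_top.2 hf

theorem thetaDim_congr (f : M ≃ₗ[R] N) : thetaDim k R ι θ e M = thetaDim k R ι θ e N := by
  refine Finset.sum_congr rfl fun i _ => ?_
  rw [range_smulMap_eq_map (k := k) f.surjective]
  exact congrArg (θ i * ·)
    (congrArg Nat.cast (LinearEquiv.finrank_map_eq (f.restrictScalars k) _).symm)

theorem thetaDim_of_subsingleton [Subsingleton M] : thetaDim k R ι θ e M = 0 := by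
  simp [thetaDim, finrank_zero_of_subsingleton]

theorem map_subtype_range_smulMap {a : R} (ha : IsIdempotentElem a) (N : Submodule R M) :
    (LinearMap.range (smulMap k R a N)).map (N.subtype.restrictScalars k) =
      LinearMap.range (smulMap k R a M) ⊓ N.restrictScalars k := by
  ext x
  constructor
  · rintro ⟨_, ⟨n, rfl⟩, rfl⟩
    exact ⟨⟨n, rfl⟩, (a • n).2⟩
  · rintro ⟨⟨m, rfl⟩, hx⟩
    refine ⟨⟨a • m, hx⟩, ⟨⟨a • m, hx⟩, ?_⟩, rfl⟩
    exact Subtype.ext (by simp [smulMap, ← mul_smul, ha.eq])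

theorem finrank_range_smulMap_add [FiniteDimensional k M] {a : R} (ha : IsIdempotentElem a)
    (N : Submodule R M) :
    finrank k (LinearMap.range (smulMap k R a N)) +
        finrank k (LinearMap.range (smulMap k R a (M ⧸ N))) =
      finrank k (LinearMap.range (smulMap k R a M)) := by
  set V := LinearMap.range (smulMap k R a M)
  let q := (N.mkQ.restrictScalars k).domRestrict V
  have hker : finrank k (LinearMap.ker q) = finrank k (LinearMap.range (smulMap k R a N)) := by
    rw [LinearMap.ker_domRestrict, ← Submodule.finrank_map_subtype_eq, Submodule.map_comap_subtype,
      LinearMap.ker_restrictScalars, Submodule.ker_mkQ, ← map_subtype_range_smulMap ha]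
    exact (Submodule.equivMapOfInjective (N.subtype.restrictScalars k) N.injective_subtype
      _).finrank_eq.symm
  rw [range_smulMap_eq_map (k := k) N.mkQ_surjective, ← LinearMap.range_domRestrict, ← hker,
    add_comm, LinearMap.finrank_range_add_finrank_ker q]

theorem thetaDim_add_quotient (he : ∀ i, IsIdempotentElem (e i)) [FiniteDimensional k M]
    (N : Submodule R M) :
    thetaDim k R ι θ e N + thetaDim k R ι θ e (M ⧸ N) = thetaDim k R ι θ e M := by
  simp only [thetaDim, ← Finset.sum_add_distrib, ← mul_add, ← Nat.cast_add,
    finrank_range_smulMap_add (he _)]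

theorem thetaDim_ker_add_range (he : ∀ i, IsIdempotentElem (e i)) [FiniteDimensional k M]
    (f : M →ₗ[R] N) :
    thetaDim k R ι θ e (LinearMap.ker f) + thetaDim k R ι θ e (LinearMap.range f) =
      thetaDim k R ι θ e M := by
  rw [← thetaDim_congr θ e f.quotKerEquivRange, thetaDim_add_quotient θ e he]

end ThetaDim

section Factor

variable {R X Y Z E : Type} [Ring R] [AddCommGroup X] [Module R X] [AddCommGroup Y] [Module R Y]
  [AddCommGroup Z] [Module R Z] [AddCommGroup E] [Module R E]

theorem LinearMap.exists_comp_eq_of_range_le {f : Y →ₗ[R] E} (hf : Function.Injective f)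
    {h : X →ₗ[R] E} (hh : LinearMap.range h ≤ LinearMap.range f) :
    ∃ α : X →ₗ[R] Y, f ∘ₗ α = h :=
  ⟨(LinearEquiv.ofInjective f hf).symm ∘ₗ h.codRestrict _ fun x => hh ⟨x, rfl⟩,
    LinearMap.ext fun _ => LinearEquiv.ofInjective_symm_apply (h := hf) f _⟩

theorem Function.Exact.exists_comp_eq_of_comp_eq_zero {f : X →ₗ[R] Y} {g : Y →ₗ[R] Z}
    (hfg : Function.Exact f g) (hg : Function.Surjective g) {h : Y →ₗ[R] E}
    (hh : h ∘ₗ f = 0) : ∃ s : Z →ₗ[R] E, s ∘ₗ g = h :=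
  ⟨(LinearMap.range f).liftQ h (fun _ ⟨x, hx⟩ => hx ▸ LinearMap.congr_fun hh x) ∘ₗ
      (hfg.linearEquivOfSurjective hg).symm.toLinearMap,
    LinearMap.ext fun y => by simp⟩

end Factor

def HasProjDimLEOne (A : Type) [Ring A] (T : Type) [AddCommGroup T] [Module A T] : Prop :=
  ∃ (P₀ P₁ : ModuleCat.{0} A) (f : ↥P₁ →ₗ[A] ↥P₀) (g : ↥P₀ →ₗ[A] T),
    Module.Projective A P₀ ∧ Module.Projective A P₁ ∧
    Function.Injective f ∧ Function.Surjective g ∧ Function.Exact f g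

namespace Ext1Vanishes

open LinearMap

variable {A T Y Z P₀ P₁ : Type} [Ring A] [AddCommGroup T] [Module A T] [AddCommGroup Y]
  [Module A Y] [AddCommGroup Z] [Module A Z] [AddCommGroup P₀] [Module A P₀] [AddCommGroup P₁]
  [Module A P₁] {ι₀ : P₁ →ₗ[A] P₀} {p₀ : P₀ →ₗ[A] T}

theorem of_linearEquiv (e : Y ≃ₗ[A] Z) (h : Ext1Vanishes A T Y) : Ext1Vanishes A T Z :=
  fun E _ _ f g hf hg hfg =>
    h E (f ∘ₗ e.toLinearMap) g (hf.comp e.injective) hg (e.precomp_exact_iff_exact.2 hfg)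

theorem of_subsingleton [Subsingleton Y] : Ext1Vanishes A T Y := by
  intro E _ _ f g _ hg hfg
  have hginj : Function.Injective g :=
    (LinearMap.injective_iff_eq_zero_of_exact hfg).2 (Subsingleton.elim _ _)
  exact ⟨(LinearEquiv.ofBijective g ⟨hginj, hg⟩).symm.toLinearMap,
    LinearMap.ext (LinearEquiv.ofBijective g ⟨hginj, hg⟩).apply_symm_apply⟩

-- Split the pullback of the extension along `g`.
theorem exists_comp_eq (h : Ext1Vanishes A T Y) {E F : Type} [AddCommGroup E] [Module A E]
    [AddCommGroup F] [Module A F] {f : Y →ₗ[A] E} {q : E →ₗ[A] F} (hf : Function.Injective f)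
    (hq : Function.Surjective q) (hfq : Function.Exact f q) (g : T →ₗ[A] F) :
    ∃ l : T →ₗ[A] E, q ∘ₗ l = g := by
  let P : Submodule A (T × E) :=
    LinearMap.ker (g ∘ₗ LinearMap.fst A T E - q ∘ₗ LinearMap.snd A T E)
  have hmem : ∀ {t e}, (t, e) ∈ P ↔ q e = g t := by
    intro t e
    rw [LinearMap.mem_ker, eq_comm (a := q e)]
    simp [sub_eq_zero]
  let i : Y →ₗ[A] P := (LinearMap.inr A T E ∘ₗ f).codRestrict P fun y =>
    hmem.2 (by simp [hfq.apply_apply_eq_zero])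
  let p : P →ₗ[A] T := LinearMap.fst A T E ∘ₗ P.subtype
  have hi : Function.Injective i := fun y₁ y₂ hy =>
    hf (congrArg (fun x : P => (x : T × E).2) hy)
  have hp : Function.Surjective p := fun t => by
    obtain ⟨e, he⟩ := hq (g t)
    exact ⟨⟨(t, e), hmem.2 he⟩, rfl⟩
  have hip : Function.Exact i p := by
    rintro ⟨⟨t, e⟩, hte⟩
    constructor
    · rintro (rfl : t = 0)
      obtain ⟨y, rfl⟩ := (hfq e).1 (by simpa using hmem.1 hte)
      exact ⟨y, rfl⟩
    · rintro ⟨y, hy⟩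
      rw [← hy]
      rfl
  obtain ⟨s, hs⟩ := h P i p hi hp hip
  refine ⟨LinearMap.snd A T E ∘ₗ P.subtype ∘ₗ s, LinearMap.ext fun t => ?_⟩
  have hst : (s t : T × E).1 = t := LinearMap.congr_fun hs t
  simpa [hst] using hmem.1 (s t).2

theorem prod {Y₁ Y₂ : Type} [AddCommGroup Y₁] [Module A Y₁] [AddCommGroup Y₂] [Module A Y₂]
    (h₁ : Ext1Vanishes A T Y₁) (h₂ : Ext1Vanishes A T Y₂) : Ext1Vanishes A T (Y₁ × Y₂) := by
  intro E _ _ f g hf hg hfg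
  set S := LinearMap.range (f ∘ₗ LinearMap.inr A Y₁ Y₂)
  have hSg : S ≤ LinearMap.ker g := by
    rintro _ ⟨y, rfl⟩
    exact hfg.apply_apply_eq_zero _
  let f' : Y₁ →ₗ[A] E ⧸ S := S.mkQ ∘ₗ f ∘ₗ LinearMap.inl A Y₁ Y₂
  let g' : E ⧸ S →ₗ[A] T := S.liftQ g hSg
  have hf' : Function.Injective f' := by
    refine (injective_iff_map_eq_zero f').2 fun y hy => ?_
    obtain ⟨y₂, hy₂⟩ := (Submodule.Quotient.mk_eq_zero S).1 hy
    exact (congrArg Prod.fst (hf hy₂)).symm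
  have hg' : Function.Surjective g' := fun t => by
    obtain ⟨e, rfl⟩ := hg t
    exact ⟨S.mkQ e, rfl⟩
  have hfg' : Function.Exact f' g' := by
    intro x
    obtain ⟨e, rfl⟩ := S.mkQ_surjective x
    constructor
    · intro he
      obtain ⟨⟨y₁, y₂⟩, rfl⟩ := (hfg e).1 he
      refine ⟨y₁, (Submodule.Quotient.eq S).2 ⟨-y₂, ?_⟩⟩
      simp [← map_sub]
    · rintro ⟨y, hy⟩
      rw [← hy]
      exact hfg.apply_apply_eq_zero _
  obtain ⟨s', hs'⟩ := h₁ _ f' g' hf' hg' hfg'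
  obtain ⟨l, hl⟩ := h₂.exists_comp_eq (hf.comp LinearMap.inr_injective) S.mkQ_surjective
    (LinearMap.exact_iff.2 (Submodule.ker_mkQ S)) s'
  exact ⟨l, by rw [← hs', ← hl]; rfl⟩

theorem pi {ι : Type} [Finite ι] {Y : ι → Type} [∀ i, AddCommGroup (Y i)] [∀ i, Module A (Y i)]
    (h : ∀ i, Ext1Vanishes A T (Y i)) : Ext1Vanishes A T (∀ i, Y i) :=
  Module.pi_induction' A (fun N _ _ => Ext1Vanishes A T N) (fun N _ _ => Ext1Vanishes A T N)
    (fun e h => h.of_linearEquiv e) (fun e h => h.of_linearEquiv e) of_subsingleton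
    (fun h₁ h₂ => h₁.prod h₂) Y h

theorem exists_pushout (hι : Function.Injective ι₀) (hp : Function.Surjective p₀)
    (hex : Function.Exact ι₀ p₀) (α : P₁ →ₗ[A] Y) :
    ∃ (X : Type) (_ : AddCommGroup X) (_ : Module A X) (f : Y →ₗ[A] X) (g : X →ₗ[A] T)
      (j : P₀ →ₗ[A] X), Function.Injective f ∧ Function.Surjective g ∧ Function.Exact f g ∧
        j ∘ₗ ι₀ = f ∘ₗ α := by
  let G : Submodule A (Y × P₀) := range (α.prod (-ι₀))
  have hG : G ≤ ker (p₀ ∘ₗ snd A Y P₀) := by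
    rintro _ ⟨u, rfl⟩
    simp [hex.apply_apply_eq_zero]
  refine ⟨_ ⧸ G, _, _, G.mkQ ∘ₗ inl A Y P₀, G.liftQ _ hG, G.mkQ ∘ₗ inr A Y P₀, ?_, ?_, ?_, ?_⟩
  · refine (injective_iff_map_eq_zero _).2 fun y hy => ?_
    obtain ⟨u, hu⟩ := (Submodule.Quotient.mk_eq_zero G).1 hy
    obtain rfl : u = 0 := hι (by simpa using congrArg Prod.snd hu)
    simpa using (congrArg Prod.fst hu).symm
  · intro t
    obtain ⟨p, rfl⟩ := hp t
    exact ⟨G.mkQ (0, p), rfl⟩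
  · intro x
    obtain ⟨⟨y, p⟩, rfl⟩ := G.mkQ_surjective x
    constructor
    · intro hx
      obtain ⟨u, rfl⟩ := (hex p).1 hx
      refine ⟨y + α u, (Submodule.Quotient.eq G).2 ⟨u, ?_⟩⟩
      simp
    · rintro ⟨y', hy'⟩
      rw [← hy']
      simp
  · ext u
    refine (Submodule.Quotient.eq G).2 ⟨-u, ?_⟩
    simp

-- For a projective resolution `0 → P₁ → P₀ → T → 0`, `Ext¹(T, Y)` is the cokernel of the
-- restriction `Hom(P₀, Y) → Hom(P₁, Y)`; this lemma and the next are the two halves of that.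
theorem exists_comp_eq_of_exact (h : Ext1Vanishes A T Y) (hι : Function.Injective ι₀)
    (hp : Function.Surjective p₀) (hex : Function.Exact ι₀ p₀) (α : P₁ →ₗ[A] Y) :
    ∃ β : P₀ →ₗ[A] Y, β ∘ₗ ι₀ = α := by
  obtain ⟨X, _, _, f, g, j, hf, hg, hfg, hj⟩ := exists_pushout hι hp hex α
  obtain ⟨r, hr⟩ := ((hfg.split_tfae hf hg).out 0 1).1 (h X f g hf hg hfg)
  exact ⟨r ∘ₗ j, by rw [comp_assoc, hj, ← comp_assoc, hr, id_comp]⟩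

theorem of_forall_exists_comp_eq [Module.Projective A P₀] (hp : Function.Surjective p₀)
    (hex : Function.Exact ι₀ p₀) (hZ : ∀ α : P₁ →ₗ[A] Z, ∃ β : P₀ →ₗ[A] Z, β ∘ₗ ι₀ = α) :
    Ext1Vanishes A T Z := by
  intro E _ _ f g hf hg hfg
  obtain ⟨l, hl⟩ := Module.projective_lifting_property g p₀ hg
  obtain ⟨α, hα⟩ := exists_comp_eq_of_range_le hf (h := l ∘ₗ ι₀) (by
    rintro _ ⟨u, rfl⟩
    refine (hfg _).1 ?_
    rw [← comp_apply g, ← comp_assoc, hl]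
    exact hex.apply_apply_eq_zero u)
  obtain ⟨β, hβ⟩ := hZ α
  obtain ⟨s, hs⟩ := hex.exists_comp_eq_of_comp_eq_zero hp (h := l - f ∘ₗ β) (by
    rw [sub_comp, comp_assoc, hβ, hα, sub_self])
  refine ⟨s, (cancel_right hp).1 ?_⟩
  rw [comp_assoc, hs, comp_sub, hl, ← comp_assoc, hfg.linearMap_comp_eq_zero, zero_comp,
    sub_zero, id_comp]

theorem of_surjective (hT : HasProjDimLEOne A T) (hY : Ext1Vanishes A T Y) {q : Y →ₗ[A] Z}
    (hq : Function.Surjective q) : Ext1Vanishes A T Z := by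
  obtain ⟨P₀, P₁, ι₀, p₀, _, _, hι, hp, hex⟩ := hT
  refine of_forall_exists_comp_eq hp hex fun α => ?_
  obtain ⟨α', hα'⟩ := Module.projective_lifting_property q α hq
  obtain ⟨β, hβ⟩ := hY.exists_comp_eq_of_exact hι hp hex α'
  exact ⟨q ∘ₗ β, by rw [comp_assoc, hβ, hα']⟩

end Ext1Vanishes

section HomFunctor

open LinearMap

variable {A T W M : Type} [Ring A] [AddCommGroup T] [Module A T] [AddCommGroup W] [Module A W]
  [AddCommGroup M] [Module A M]

theorem endOp_smul_apply (b : (Module.End A T)ᵐᵒᵖ) (f : T →ₗ[A] M) (t : T) :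
    (b • f) t = f (b.unop t) :=
  rfl

variable (T) in
def homComp (c : W →ₗ[A] M) : (T →ₗ[A] W) →ₗ[(Module.End A T)ᵐᵒᵖ] (T →ₗ[A] M) where
  toFun g := c ∘ₗ g
  map_add' g₁ g₂ := comp_add g₁ g₂ c
  map_smul' _ _ := rfl

@[simp]
theorem homComp_apply (c : W →ₗ[A] M) (g : T →ₗ[A] W) : homComp T c g = c ∘ₗ g :=
  rfl

theorem range_homComp_sum {ι : Type} [Fintype ι] [DecidableEq ι] (v : ι → T →ₗ[A] M) :
    range (homComp T (∑ j, v j ∘ₗ proj j)) =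
      Submodule.span (Module.End A T)ᵐᵒᵖ (Set.range v) := by
  apply le_antisymm
  · rintro _ ⟨g, rfl⟩
    have hg : homComp T (∑ j, v j ∘ₗ proj j) g = ∑ j, MulOpposite.op (proj j ∘ₗ g) • v j := by
      ext t
      simp [endOp_smul_apply]
    rw [hg]
    exact Submodule.sum_mem _ fun j _ => Submodule.smul_mem _ _ (Submodule.subset_span ⟨j, rfl⟩)
  · rw [Submodule.span_le]
    rintro _ ⟨j, rfl⟩
    exact ⟨single A (fun _ => T) j, by ext t; simp [Pi.single_apply, apply_ite]⟩

theorem eq_zero_of_injective_homComp {c : W →ₗ[A] M} (hc : Function.Injective (homComp T c))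
    (g : T →ₗ[A] ker c) : g = 0 := by
  have hg : (ker c).subtype ∘ₗ g = 0 := hc (by ext t; simp)
  ext t
  simpa using LinearMap.congr_fun hg t

end HomFunctor

open LinearMap in
theorem exists_ext1Vanishes_homComp_range_eq {k A T M : Type} [Field k] [Ring A] [Algebra k A]
    [AddCommGroup T] [Module k T] [Module A T] [IsScalarTower k A T] [FiniteDimensional k T]
    [AddCommGroup M] [Module k M] [Module A M] [IsScalarTower k A M] [FiniteDimensional k M]
    (hT : HasProjDimLEOne A T) (hTT : Ext1Vanishes A T T)
    (N : Submodule (Module.End A T)ᵐᵒᵖ (T →ₗ[A] M)) :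
    ∃ (n : ℕ) (R : Submodule A (Fin n → T)) (c : ((Fin n → T) ⧸ R) →ₗ[A] M),
      Ext1Vanishes A T ((Fin n → T) ⧸ R) ∧ Function.Injective (homComp T c) ∧
        range (homComp T c) = N := by
  have hFG : ∀ {X : Type} [AddCommGroup X] [Module k X] [Module A X] [IsScalarTower k A X]
      [FiniteDimensional k X] (N : Submodule (Module.End A T)ᵐᵒᵖ (T →ₗ[A] X)), N.FG :=
    fun N => (isNoetherian_of_tower k inferInstance).noetherian N
  have hpi : ∀ n, Ext1Vanishes A T (Fin n → T) := fun _ => Ext1Vanishes.pi fun _ => hTT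
  obtain ⟨n, v, hv⟩ := Submodule.fg_iff_exists_fin_generating_family.1 (hFG N)
  set π := homComp T (∑ j, v j ∘ₗ proj j) with hπ
  obtain ⟨m, x, hx⟩ := Submodule.fg_iff_exists_fin_generating_family.1 (hFG (ker π))
  set φ := ∑ l, x l ∘ₗ proj l
  set R := range φ
  have hxπ : ∀ l, x l ∈ ker π := fun l => hx ▸ Submodule.subset_span ⟨l, rfl⟩
  have hR : R ≤ ker (∑ j, v j ∘ₗ proj j) := by
    rintro _ ⟨t, rfl⟩
    rw [mem_ker, LinearMap.sum_apply _ fun l => x l ∘ₗ proj l, map_sum]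
    exact Finset.sum_eq_zero fun l _ => LinearMap.congr_fun (mem_ker.1 (hxπ l)) _
  let c := R.liftQ _ hR
  set ψ := homComp T R.mkQ
  have hψ : Function.Surjective ψ := fun g =>
    ((hpi m).of_surjective hT φ.surjective_rangeRestrict).exists_comp_eq R.injective_subtype
      R.mkQ_surjective (LinearMap.exact_subtype_mkQ R) g
  have hcψ : homComp T c ∘ₗ ψ = π := by
    ext g t
    simp [c, ψ, π]
  have hπψ : ker π ≤ ker ψ := by
    rw [← hx, Submodule.span_le]
    rintro _ ⟨l, rfl⟩
    rw [SetLike.mem_coe, mem_ker, homComp_apply, ← range_le_ker_iff, Submodule.ker_mkQ]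
    rintro _ ⟨t, rfl⟩
    exact ⟨Pi.single l t, by simp [φ, Pi.single_apply, apply_ite]⟩
  refine ⟨n, R, c, (hpi n).of_surjective hT R.mkQ_surjective, ?_, ?_⟩
  · refine (injective_iff_map_eq_zero _).2 fun g hg => ?_
    obtain ⟨h, rfl⟩ := hψ g
    exact hπψ (by rw [mem_ker, ← hcψ, comp_apply, hg])
  · rw [← hv, ← range_homComp_sum, ← hπ, ← hcψ, range_comp_of_range_eq_top _ (range_eq_top.2 hψ)]

-- `hcompat` encodes `θ' = θ ∘ u⁻¹` on the torsion class, where `u (dim M) = dim Hom_A(T, M)`.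
theorem stmt_15_general (k A ι ι' : Type) [Field k] [Ring A] [Algebra k A]
    [Fintype ι] [Fintype ι'] (θ : ι → ℤ) (e : ι → A)
    (he : ∀ i, IsIdempotentElem (e i))
    (T : Type) [AddCommGroup T] [Module k T] [Module A T] [IsScalarTower k A T]
    [FiniteDimensional k T]
    (htilt : IsTiltingModule A T)
    (θ' : ι' → ℤ) (e' : ι' → (Module.End A T)ᵐᵒᵖ)
    (hcompat : ∀ (M : Type) [AddCommGroup M] [Module k M] [Module A M]
        [IsScalarTower k A M] [FiniteDimensional k M], Ext1Vanishes A T M →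
        thetaDim k (Module.End A T)ᵐᵒᵖ ι' θ' e' (T →ₗ[A] M) = thetaDim k A ι θ e M)
    (hsstorsion : ∀ (M : Type) [AddCommGroup M] [Module k M] [Module A M]
        [IsScalarTower k A M] [FiniteDimensional k M],
        IsSemistable k A ι θ e M → Ext1Vanishes A T M)
    (hfneg : ∀ (X : Type) [AddCommGroup X] [Module k X] [Module A X]
        [IsScalarTower k A X] [FiniteDimensional k X], Nontrivial X →
        (∀ f : T →ₗ[A] X, f = 0) → thetaDim k A ι θ e X < 0)
    (M : Type) [AddCommGroup M] [Module k M] [Module A M] [IsScalarTower k A M]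
    [FiniteDimensional k M]
    (hM : IsSemistable k A ι θ e M) :
    IsSemistable k (Module.End A T)ᵐᵒᵖ ι' θ' e' (T →ₗ[A] M) := by
  obtain ⟨hT, hTT, -⟩ := htilt
  refine ⟨(hcompat M (hsstorsion M hM)).trans hM.1, fun N => ?_⟩
  obtain ⟨n, R, c, hW, hc, hrange⟩ := exists_ext1Vanishes_homComp_range_eq (k := k) hT hTT N
  have hker : thetaDim k A ι θ e (LinearMap.ker c) ≤ 0 := by
    rcases subsingleton_or_nontrivial (LinearMap.ker c) with _ | hnt
    · exact (thetaDim_of_subsingleton θ e).le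
    · exact (hfneg _ hnt (eq_zero_of_injective_homComp hc)).le
  calc thetaDim k (Module.End A T)ᵐᵒᵖ ι' θ' e' N
      = thetaDim k (Module.End A T)ᵐᵒᵖ ι' θ' e' (T →ₗ[A] ((Fin n → T) ⧸ R)) :=
        (thetaDim_congr θ' e' ((LinearEquiv.ofInjective _ hc).trans (.ofEq _ _ hrange))).symm
    _ = thetaDim k A ι θ e ((Fin n → T) ⧸ R) := hcompat _ hW
    _ = thetaDim k A ι θ e (LinearMap.ker c) + thetaDim k A ι θ e (LinearMap.range c) :=
        (thetaDim_ker_add_range θ e he c).symm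
    _ ≤ 0 := add_nonpos hker (hM.2 _)

/-- `A` a finite-dimensional algebra, `T` a tilting `A`-module of
projective dimension `≤ 1`, `B = End_A(T)^op`, and `θ` an integral weight of `A`
(given by the idempotents `e` of `A`) such that all `θ`-semi-stable modules lie in
the torsion class `T(T) = {M : Ext¹_A(T,M) = 0}` and `θ(dim X) < 0` for every nonzero
module `X` in the torsion-free class `F(T) = {X : Hom_A(T,X) = 0}`.  Let
`θ' = θ ∘ u⁻¹` be the corresponding weight of `B`, where `u : K₀(A) → K₀(B)` is the
tilting isometry: concretely, `θ'` (a weight for the idempotents `e'` of `B`) is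
required to satisfy `θ'(dim Hom_A(T,M)) = θ(dim M)` for every finite-dimensional
module `M ∈ T(T)` (which characterizes `θ ∘ u⁻¹`).  Then for every `θ`-semi-stable
`A`-module `M`, the `B`-module `Hom_A(T, M)` is `θ'`-semi-stable. -/
theorem stmt_15 (k A ι ι' : Type) [Field k] [Ring A] [Algebra k A] [FiniteDimensional k A]
    [Fintype ι] [Fintype ι'] (θ : ι → ℤ) (e : ι → A)
    (he : ∀ i, IsIdempotentElem (e i))
    (horth : Pairwise fun i j => e i * e j = 0)
    (hsum : ∑ i, e i = 1)
    (T : Type) [AddCommGroup T] [Module k T] [Module A T] [IsScalarTower k A T]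
    [FiniteDimensional k T]
    (htilt : IsTiltingModule A T)
    (θ' : ι' → ℤ) (e' : ι' → (Module.End A T)ᵐᵒᵖ)
    (he' : ∀ i, IsIdempotentElem (e' i))
    (horth' : Pairwise fun i j => e' i * e' j = 0)
    (hsum' : ∑ i, e' i = 1)
    (hcompat : ∀ (M : Type) [AddCommGroup M] [Module k M] [Module A M]
        [IsScalarTower k A M] [FiniteDimensional k M], Ext1Vanishes A T M →
        thetaDim k (Module.End A T)ᵐᵒᵖ ι' θ' e' (T →ₗ[A] M) = thetaDim k A ι θ e M)
    (hsstorsion : ∀ (M : Type) [AddCommGroup M] [Module k M] [Module A M]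
        [IsScalarTower k A M] [FiniteDimensional k M],
        IsSemistable k A ι θ e M → Ext1Vanishes A T M)
    (hfneg : ∀ (X : Type) [AddCommGroup X] [Module k X] [Module A X]
        [IsScalarTower k A X] [FiniteDimensional k X], Nontrivial X →
        (∀ f : T →ₗ[A] X, f = 0) → thetaDim k A ι θ e X < 0)
    (M : Type) [AddCommGroup M] [Module k M] [Module A M] [IsScalarTower k A M]
    [FiniteDimensional k M]
    (hM : IsSemistable k A ι θ e M) :
    IsSemistable k (Module.End A T)ᵐᵒᵖ ι' θ' e' (T →ₗ[A] M) :=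
  stmt_15_general k A ι ι' θ e he T htilt θ' e' hcompat hsstorsion hfneg M hM
end
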